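/- arXiv:2404.07630 — 6 statements merged into one kernel-verified Lean document; each statement's English description precedes it below -/
import Mathlib

section
/- Let X be a real-valued random variable on a probability space with an atomless distribution and finite mean μ₀ = E[X]. Let W ⊆ ℝ be a Borel set with P(X ∈ W) > 0, let λ ∈ (0,1], and define μ_ND := λ·E[X | X ∈ W] + (1−λ)·μ₀. Then P(X ∈ W and |X − μ₀| > |μ_ND − μ₀|) > 0. (In particular there exists a withheld realization whose disclosure induces strictly larger price volatility than non-disclosure, which is the key step proving that an investor who can trade in both directions always discloses a single verifiable signal.) -/
/-!
Write `S = X⁻¹' W`, `m` for the mean of `X` on `S`, and `r = |μND - μ₀| = λ |m - μ₀| ≤ |m - μ₀|`.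
By Jensen, `|m - μ₀|` is at most the average of `|X - μ₀|` on `S`, so by the first moment method
`r ≤ |X - μ₀|` on a subset of `S` of positive measure. Since `X` has no atoms, the level set
`|X - μ₀| = r ⊆ {X = μ₀ + r} ∪ {X = μ₀ - r}` is null, so the inequality is strict with positive
probability.
-/

open MeasureTheory

section SetAverage

variable {α : Type*} [MeasurableSpace α] {μ : Measure α} {s : Set α}

theorem norm_setAverage_le_setAverage_norm {E : Type*} [NormedAddCommGroup E] [NormedSpace ℝ E]
    (f : α → E) : ‖⨍ x in s, f x ∂μ‖ ≤ ⨍ x in s, ‖f x‖ ∂μ := by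
  rw [setAverage_eq, setAverage_eq, norm_smul, Real.norm_of_nonneg (by positivity), smul_eq_mul]
  gcongr
  exact norm_integral_le_integral_norm f

theorem setAverage_sub_const (hs₀ : μ s ≠ 0) (hs : μ s ≠ ⊤) {f : α → ℝ} (hf : IntegrableOn f s μ)
    (c : ℝ) : ⨍ x in s, (f x - c) ∂μ = ⨍ x in s, f x ∂μ - c := by
  have hreal : μ.real s ≠ 0 := (ENNReal.toReal_pos hs₀ hs).ne'
  rw [setAverage_eq, setAverage_eq, integral_sub hf (integrableOn_const hs), setIntegral_const,
    smul_sub, smul_eq_mul, smul_eq_mul, smul_eq_mul, inv_mul_cancel_left₀ hreal]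

theorem abs_setAverage_sub_le (hs₀ : μ s ≠ 0) (hs : μ s ≠ ⊤) {f : α → ℝ}
    (hf : IntegrableOn f s μ) (c : ℝ) :
    |⨍ x in s, f x ∂μ - c| ≤ ⨍ x in s, |f x - c| ∂μ := by
  rw [← setAverage_sub_const hs₀ hs hf]
  exact norm_setAverage_le_setAverage_norm (fun x => f x - c)

theorem measure_lt_pos_of_le_setAverage (hs₀ : μ s ≠ 0) (hs : μ s ≠ ⊤) {f : α → ℝ}
    (hf : IntegrableOn f s μ) {r : ℝ} (hr : r ≤ ⨍ x in s, f x ∂μ) (hr₀ : μ {x | f x = r} = 0) :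
    0 < μ {x ∈ s | r < f x} :=
  calc 0 < μ {x ∈ s | ⨍ a in s, f a ∂μ ≤ f x} := measure_setAverage_le_pos hs₀ hs hf
    _ ≤ μ ({x ∈ s | r < f x} ∪ {x | f x = r}) :=
      measure_mono fun x ⟨hxs, hx⟩ => (hr.trans hx).lt_or_eq.imp (⟨hxs, ·⟩) Eq.symm
    _ ≤ μ {x ∈ s | r < f x} + μ {x | f x = r} := measure_union_le _ _
    _ = μ {x ∈ s | r < f x} := by rw [hr₀, add_zero]

end SetAverage

theorem measure_abs_sub_eq_eq_zero {α : Type*} [MeasurableSpace α] {μ : Measure α} {f : α → ℝ}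
    (hf : ∀ c : ℝ, μ {x | f x = c} = 0) (a r : ℝ) : μ {x | |f x - a| = r} = 0 := by
  refine measure_mono_null (fun x (hx : |f x - a| = r) => ?_)
    (measure_union_null (hf (a + r)) (hf (a - r)))
  rcases (abs_eq (hx ▸ abs_nonneg _)).mp hx with h | h
  · exact Or.inl (show f x = a + r by linarith)
  · exact Or.inr (show f x = a - r by linarith)

theorem abs_convexComb_sub_le {t : ℝ} (ht₀ : 0 ≤ t) (ht₁ : t ≤ 1) (m c : ℝ) :
    |t * m + (1 - t) * c - c| ≤ |m - c| :=
  calc |t * m + (1 - t) * c - c| = t * |m - c| := by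
        rw [show t * m + (1 - t) * c - c = t * (m - c) by ring, abs_mul, abs_of_nonneg ht₀]
    _ ≤ |m - c| := mul_le_of_le_one_left (abs_nonneg _) ht₁

theorem stmt_0_general {Ω : Type*} [MeasurableSpace Ω] (μ : Measure Ω) [IsProbabilityMeasure μ]
    (X : Ω → ℝ)
    (hatomless : ∀ c : ℝ, μ {ω | X ω = c} = 0)
    (hint : Integrable X μ)
    (μ₀ : ℝ)
    (W : Set ℝ)
    (hpos : 0 < μ (X ⁻¹' W))
    (lam : ℝ) (hlam : lam ∈ Set.Ioc (0 : ℝ) 1)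
    (μND : ℝ)
    (hμND : μND = lam * ((∫ ω in X ⁻¹' W, X ω ∂μ) / (μ (X ⁻¹' W)).toReal)
      + (1 - lam) * μ₀) :
    0 < μ {ω | X ω ∈ W ∧ |μND - μ₀| < |X ω - μ₀|} := by
  set S := X ⁻¹' W
  have hmean : (∫ ω in S, X ω ∂μ) / (μ S).toReal = ⨍ ω in S, X ω ∂μ := by
    rw [setAverage_eq, smul_eq_mul, measureReal_def, inv_mul_eq_div]
  have hvol : |μND - μ₀| ≤ ⨍ ω in S, |X ω - μ₀| ∂μ :=
    calc |μND - μ₀| ≤ |⨍ ω in S, X ω ∂μ - μ₀| := by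
          rw [hμND, hmean]; exact abs_convexComb_sub_le hlam.1.le hlam.2 _ _
      _ ≤ ⨍ ω in S, |X ω - μ₀| ∂μ :=
          abs_setAverage_sub_le hpos.ne' (measure_ne_top μ S) hint.integrableOn μ₀
  exact measure_lt_pos_of_le_setAverage hpos.ne' (measure_ne_top μ S)
    (hint.sub (integrable_const μ₀)).abs.integrableOn hvol
    (measure_abs_sub_eq_eq_zero hatomless μ₀ _)

/-- Single-signal unraveling (key step of Lemma 2): if a positive-probability set `W` of
realizations is withheld and the non-disclosure price is the convex combination
`μND = λ·E[X | X ∈ W] + (1−λ)·μ₀`, then with positive probability a withheld realization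
induces strictly larger price volatility than non-disclosure. -/
theorem stmt_0 {Ω : Type*} [MeasurableSpace Ω] (μ : Measure Ω) [IsProbabilityMeasure μ]
    (X : Ω → ℝ) (hX : Measurable X)
    (hatomless : ∀ c : ℝ, μ {ω | X ω = c} = 0)
    (hint : Integrable X μ)
    (μ₀ : ℝ) (hμ₀ : μ₀ = ∫ ω, X ω ∂μ)
    (W : Set ℝ) (hW : MeasurableSet W)
    (hpos : 0 < μ (X ⁻¹' W))
    (lam : ℝ) (hlam : lam ∈ Set.Ioc (0 : ℝ) 1)
    (μND : ℝ)
    (hμND : μND = lam * ((∫ ω in X ⁻¹' W, X ω ∂μ) / (μ (X ⁻¹' W)).toReal)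
      + (1 - lam) * μ₀) :
    0 < μ {ω | X ω ∈ W ∧ |μND - μ₀| < |X ω - μ₀|} :=
  stmt_0_general μ X hatomless hint μ₀ W hpos lam hlam μND hμND
end

section
/- Let b, c be real numbers with b < c and let q ∈ (0,1). For every real t: |q·t + (1−q)·b − c| ≥ |t − c| if and only if b ≤ t ≤ (2c − (1−q)·b)/(1+q). -/
/-! Writing `u = t - c` and `v = q t + (1 - q) b - c`, the inequality `|u| ≤ |v|` is
`0 ≤ (v - u)(v + u)`, and this product factors as `(1 - q)(1 + q)(t - b)(R - t)` with
`R = (2c - (1 - q) b)/(1 + q)`. Since `b < c` gives `b < R`, the product is nonnegative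
exactly on `[b, R]`. -/

section

variable {α : Type*}

theorem abs_le_abs_iff_nonneg_mul [CommRing α] [LinearOrder α] [IsStrictOrderedRing α]
    {a b : α} : |a| ≤ |b| ↔ 0 ≤ (b - a) * (b + a) := by
  rw [← sq_le_sq, ← sub_nonneg, sq_sub_sq, mul_comm]

theorem mem_Icc_iff_nonneg_mul [Ring α] [LinearOrder α] [IsStrictOrderedRing α]
    {a b t : α} (hab : a < b) : t ∈ Set.Icc a b ↔ 0 ≤ (t - a) * (b - t) := by
  rw [Set.mem_Icc, mul_nonneg_iff, sub_nonneg, sub_nonneg, sub_nonpos, sub_nonpos]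
  constructor
  · exact Or.inl
  · rintro (h | ⟨hta, hbt⟩)
    · exact h
    · exact absurd (hbt.trans hta) hab.not_ge

end

/-- Withholding characterization when `b < c` (case `r < r₀`): the price volatility from
withholding, `|q·t + (1−q)·b − c|`, exceeds that from disclosing, `|t − c|`, exactly when
`t` lies in the interval `[b, (2c − (1−q)b)/(1+q)]`. -/
theorem stmt_1 (b c q : ℝ) (hbc : b < c) (hq : q ∈ Set.Ioo (0 : ℝ) 1) (t : ℝ) :
    |q * t + (1 - q) * b - c| ≥ |t - c| ↔
      b ≤ t ∧ t ≤ (2 * c - (1 - q) * b) / (1 + q) := by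
  obtain ⟨hq0, hq1⟩ := hq
  set R := (2 * c - (1 - q) * b) / (1 + q) with hR
  have h1q : 0 < 1 + q := by linarith
  have hbR : b < R := by rw [hR, lt_div_iff₀ h1q]; linarith
  have factor : (q * t + (1 - q) * b - c - (t - c)) * (q * t + (1 - q) * b - c + (t - c)) =
      ((1 - q) * (1 + q)) * ((t - b) * (R - t)) := by
    rw [hR]; field_simp; ring
  rw [ge_iff_le, abs_le_abs_iff_nonneg_mul, factor,
    mul_nonneg_iff_of_pos_left (mul_pos (by linarith) h1q), ← mem_Icc_iff_nonneg_mul hbR,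
    Set.mem_Icc]
end

section
/- Let g : ℝ → ℝ be a continuous, everywhere positive probability density with CDF G(x) = ∫_{−∞}^{x} g(t) dt, ∫_ℝ g = 1, and mean μ₀ = ∫_ℝ x·g(x) dx. Let β ∈ (0,1), q ∈ (0,1), and s ∈ ℝ. Define x̄(u) = 2s/(1+q) − ((1−q)/(1+q))·u and Q(u) = β·∫_{u}^{x̄(u)} (G(x) − G(x̄(u))) dx − (1−β)·(μ₀ − u). Then Q is strictly increasing on (−∞, s]. -/
/-!
Since `G` is a CDF it is monotone, so `∫ x in a..b, (G x - G b)` is nonpositive and only grows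
when the interval `[a, b]` shrinks. For `u ≤ v ≤ s` the interval `[v, x̄ v]` lies inside
`[u, x̄ u]`, so the integral term of `Q` is monotone on `(−∞, s]`, while `(1 − β) u` is strictly
increasing.
-/

open MeasureTheory Set

theorem monotone_setIntegral_Iic {f : ℝ → ℝ} (hf : Integrable f) (h0 : ∀ x, 0 ≤ f x) :
    Monotone fun x => ∫ t in Iic x, f t := fun _ _ hxy =>
  setIntegral_mono_set hf.integrableOn (Filter.Eventually.of_forall h0)
    (Iic_subset_Iic.2 hxy).eventuallyLE

namespace Monotone

variable {G : ℝ → ℝ}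

theorem intervalIntegrable_sub_const (hG : Monotone G) (c a b : ℝ) :
    IntervalIntegrable (fun x => G x - G c) volume a b :=
  hG.intervalIntegrable.sub intervalIntegrable_const

theorem integral_sub_apply_right_le_of_right_le (hG : Monotone G) {a b b' : ℝ} (hab' : a ≤ b')
    (hb : b' ≤ b) : ∫ x in a..b, (G x - G b) ≤ ∫ x in a..b', (G x - G b') := by
  rw [← intervalIntegral.integral_add_adjacent_intervals (hG.intervalIntegrable_sub_const b a b')
    (hG.intervalIntegrable_sub_const b b' b)]
  have h_shift : ∫ x in a..b', (G x - G b) ≤ ∫ x in a..b', (G x - G b') :=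
    intervalIntegral.integral_mono_on hab' (hG.intervalIntegrable_sub_const _ _ _)
      (hG.intervalIntegrable_sub_const _ _ _) fun _ _ => by linarith [hG hb]
  have h_tail : ∫ x in b'..b, (G x - G b) ≤ 0 := by
    simpa using intervalIntegral.integral_mono_on hb (hG.intervalIntegrable_sub_const _ _ _)
      intervalIntegrable_const fun x hx => sub_nonpos.2 (hG hx.2)
  linarith

theorem integral_sub_apply_right_le_of_le_left (hG : Monotone G) {a a' b : ℝ} (ha : a ≤ a')
    (ha'b : a' ≤ b) : ∫ x in a..b, (G x - G b) ≤ ∫ x in a'..b, (G x - G b) := by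
  rw [← intervalIntegral.integral_add_adjacent_intervals (hG.intervalIntegrable_sub_const b a a')
    (hG.intervalIntegrable_sub_const b a' b)]
  have h_head : ∫ x in a..a', (G x - G b) ≤ 0 := by
    simpa using intervalIntegral.integral_mono_on ha (hG.intervalIntegrable_sub_const _ _ _)
      intervalIntegrable_const fun x hx => sub_nonpos.2 (hG (hx.2.trans ha'b))
  linarith

theorem integral_sub_apply_right_le_of_nested (hG : Monotone G) {a a' b' b : ℝ} (ha : a ≤ a')
    (ha'b' : a' ≤ b') (hb : b' ≤ b) :
    ∫ x in a..b, (G x - G b) ≤ ∫ x in a'..b', (G x - G b') :=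
  (hG.integral_sub_apply_right_le_of_right_le (ha.trans ha'b') hb).trans
    (hG.integral_sub_apply_right_le_of_le_left ha ha'b')

end Monotone

theorem stmt_6_general (g : ℝ → ℝ) (hg_pos : ∀ x, 0 < g x)
    (hg_one : (∫ x, g x) = 1)
    (μ₀ : ℝ)
    (G : ℝ → ℝ) (hG : ∀ x, G x = ∫ t in Iic x, g t)
    (β : ℝ) (hβ : β ∈ Set.Ioo (0 : ℝ) 1)
    (q : ℝ) (hq : q ∈ Set.Ioo (0 : ℝ) 1)
    (s : ℝ)
    (xbar : ℝ → ℝ) (hxbar : ∀ u, xbar u = 2 * s / (1 + q) - ((1 - q) / (1 + q)) * u)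
    (Q : ℝ → ℝ)
    (hQ : ∀ u, Q u = β * (∫ x in u..(xbar u), (G x - G (xbar u))) - (1 - β) * (μ₀ - u)) :
    StrictMonoOn Q (Set.Iic s) := by
  obtain ⟨hβ0, hβ1⟩ := hβ
  obtain ⟨hq0, hq1⟩ := hq
  have hG_mono : Monotone G := by
    have hg_int : Integrable g := Integrable.of_integral_ne_zero (by simp [hg_one])
    simpa only [← hG] using monotone_setIntegral_Iic hg_int fun x => (hg_pos x).le
  have hxbar_sub : ∀ u, xbar u - u = 2 * (s - u) / (1 + q) := fun u => by
    rw [hxbar]; field_simp; ring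
  intro u _ v hv huv
  have hv_le : v ≤ xbar v := by
    have : 0 ≤ 2 * (s - v) / (1 + q) := div_nonneg (by linarith [mem_Iic.1 hv]) (by linarith)
    linarith [hxbar_sub v]
  have hxbar_anti : xbar v ≤ xbar u := by
    rw [hxbar, hxbar]
    have : 0 ≤ (1 - q) / (1 + q) := div_nonneg (by linarith) (by linarith)
    nlinarith
  have h_area := hG_mono.integral_sub_apply_right_le_of_nested huv.le hv_le hxbar_anti
  rw [hQ, hQ]
  nlinarith [mul_le_mul_of_nonneg_left h_area hβ0.le]

/-- The equilibrium-determining function `Q` for the case `r < r₀` (with `s = r₀μ₀/r`) is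
strictly increasing on `(−∞, s]`. -/
theorem stmt_6 (g : ℝ → ℝ) (hg_cont : Continuous g) (hg_pos : ∀ x, 0 < g x)
    (hg_one : (∫ x, g x) = 1)
    (hxg_int : Integrable (fun x => x * g x))
    (μ₀ : ℝ) (hμ₀ : μ₀ = ∫ x, x * g x)
    (G : ℝ → ℝ) (hG : ∀ x, G x = ∫ t in Iic x, g t)
    (β : ℝ) (hβ : β ∈ Set.Ioo (0 : ℝ) 1)
    (q : ℝ) (hq : q ∈ Set.Ioo (0 : ℝ) 1)
    (s : ℝ)
    (xbar : ℝ → ℝ) (hxbar : ∀ u, xbar u = 2 * s / (1 + q) - ((1 - q) / (1 + q)) * u)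
    (Q : ℝ → ℝ)
    (hQ : ∀ u, Q u = β * (∫ x in u..(xbar u), (G x - G (xbar u))) - (1 - β) * (μ₀ - u)) :
    StrictMonoOn Q (Set.Iic s) :=
  stmt_6_general g hg_pos hg_one μ₀ G hG β hβ q hq s xbar hxbar Q hQ
end

section
/- Let g : ℝ → ℝ be a continuous, everywhere positive probability density with CDF G(x) = ∫_{−∞}^{x} g(t) dt, ∫_ℝ g = 1, mean μ₀ = ∫_ℝ x·g(x) dx, and μ₀ > 0. Let β ∈ (0,1), q ∈ (0,1), and let 0 < r < r₀, so that s := r₀μ₀/r > μ₀. Define x̄(u) = 2s/(1+q) − ((1−q)/(1+q))·u and Q(u) = β·∫_{u}^{x̄(u)} (G(x) − G(x̄(u))) dx − (1−β)·(μ₀ − u). Then Q has exactly one zero x̲ in (−∞, s], this zero satisfies μ₀ < x̲ < s, and the corresponding upper threshold x̄ := x̄(x̲) satisfies x̄ > s. In particular x̲ < s < x̄. -/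
open MeasureTheory Set

/-!
Write `Q u = (1 - β) (u - μ₀) - β D(u, x̄ u)`, where `D(u, w) = gapIntegral G u w ≥ 0`.
As `u` increases to `s`, the interval `[u, x̄ u]` shrinks on both sides and the level `G (x̄ u)`
drops, so `D(u, x̄ u)` decreases; hence `Q` is strictly increasing on `(-∞, s]`.
Since `x̄ s = s`, `Q s = (1 - β) (s - μ₀) > 0`, while `Q μ₀ = -β D(μ₀, x̄ μ₀) < 0`, so the
intermediate value theorem gives the unique zero, in `(μ₀, s)`.
-/

noncomputable def gapIntegral (G : ℝ → ℝ) (u w : ℝ) : ℝ := ∫ x in u..w, (G w - G x)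

theorem gapIntegral_self (G : ℝ → ℝ) (u : ℝ) : gapIntegral G u u = 0 :=
  intervalIntegral.integral_same

theorem integral_sub_eq_neg_gapIntegral (G : ℝ → ℝ) (u w : ℝ) :
    ∫ x in u..w, (G x - G w) = -gapIntegral G u w := by
  rw [gapIntegral, ← intervalIntegral.integral_neg]
  simp only [neg_sub]

section gapIntegral

variable {G : ℝ → ℝ}

theorem gapIntegral_eq (hG : Continuous G) (u w : ℝ) :
    gapIntegral G u w = (w - u) * G w - ((∫ x in (0 : ℝ)..w, G x) - ∫ x in (0 : ℝ)..u, G x) := by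
  rw [gapIntegral, intervalIntegral.integral_sub intervalIntegrable_const
    (hG.intervalIntegrable _ _), intervalIntegral.integral_const, smul_eq_mul,
    intervalIntegral.integral_interval_sub_left (hG.intervalIntegrable _ _)
    (hG.intervalIntegrable _ _)]

theorem Continuous.gapIntegral_comp {X : Type*} [TopologicalSpace X] (hG : Continuous G)
    {u w : X → ℝ} (hu : Continuous u) (hw : Continuous w) :
    Continuous fun x => gapIntegral G (u x) (w x) := by
  have hprim := intervalIntegral.continuous_primitive
    (μ := volume) (fun _ _ => hG.intervalIntegrable _ _) 0
  simp only [gapIntegral_eq hG]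
  exact ((hw.sub hu).mul (hG.comp hw)).sub ((hprim.comp hw).sub (hprim.comp hu))

theorem gapIntegral_mono (hG : Monotone G) {u v w' w : ℝ} (huv : u ≤ v) (hvw : v ≤ w')
    (hw : w' ≤ w) : gapIntegral G v w' ≤ gapIntegral G u w := by
  have hint : ∀ a b c, IntervalIntegrable (fun x => G c - G x) volume a b := fun a b c =>
    Antitone.intervalIntegrable fun _ _ h => sub_le_sub_left (hG h) _
  calc gapIntegral G v w' ≤ ∫ x in v..w', (G w - G x) :=
        intervalIntegral.integral_mono_on hvw (hint _ _ _) (hint _ _ _)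
          fun x _ => by linarith [hG hw]
    _ ≤ gapIntegral G u w :=
        intervalIntegral.integral_mono_interval huv hvw hw
          (ae_restrict_of_forall_mem measurableSet_Ioc fun x hx => sub_nonneg.2 (hG hx.2))
          (hint _ _ _)

theorem gapIntegral_pos (hG : StrictMono G) {u w : ℝ} (huw : u < w) : 0 < gapIntegral G u w :=
  intervalIntegral.intervalIntegral_pos_of_pos_on
    (Antitone.intervalIntegrable fun _ _ h => sub_le_sub_left (hG.monotone h) _)
    (fun _ hx => sub_pos.2 (hG hx.2)) huw

end gapIntegral

theorem strictMonoOn_sub_mul_gapIntegral {G b : ℝ → ℝ} {s β μ₀ : ℝ} (hG : Monotone G)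
    (hb : AntitoneOn b (Iic s)) (hb_ge : ∀ u ≤ s, u ≤ b u) (hβ : 0 ≤ β) (hβ1 : β < 1) :
    StrictMonoOn (fun u => (1 - β) * (u - μ₀) - β * gapIntegral G u (b u)) (Iic s) := by
  intro u hu v hv huv
  have hgap : gapIntegral G v (b v) ≤ gapIntegral G u (b u) :=
    gapIntegral_mono hG huv.le (hb_ge v hv) (hb hu hv huv.le)
  have := mul_le_mul_of_nonneg_left hgap hβ
  have := mul_lt_mul_of_pos_left (sub_lt_sub_right huv μ₀) (sub_pos.2 hβ1)
  linarith

theorem exists_zero_unique_of_strictMonoOn_Iic {f : ℝ → ℝ} {a s : ℝ} (has : a ≤ s)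
    (hf : ContinuousOn f (Icc a s)) (hmono : StrictMonoOn f (Iic s)) (ha : f a < 0)
    (hs : 0 < f s) : ∃ x ∈ Ioo a s, f x = 0 ∧ ∀ y ∈ Iic s, f y = 0 → y = x := by
  obtain ⟨x, hx, hfx⟩ := intermediate_value_Ioo has hf ⟨ha, hs⟩
  exact ⟨x, hx, hfx, fun y hy hfy => hmono.injOn hy hx.2.le (hfy.trans hfx.symm)⟩

theorem exists_unique_zero_sub_mul_gapIntegral {G b : ℝ → ℝ} {s β μ₀ : ℝ} (hG : StrictMono G)
    (hG_cont : Continuous G) (hb_cont : Continuous b) (hb : AntitoneOn b (Iic s))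
    (hb_ge : ∀ u ≤ s, u ≤ b u) (hbs : b s = s) (hμ₀s : μ₀ < s) (hβ0 : 0 < β) (hβ1 : β < 1) :
    ∃ x ∈ Ioo μ₀ s, (1 - β) * (x - μ₀) - β * gapIntegral G x (b x) = 0 ∧
      ∀ y ∈ Iic s, (1 - β) * (y - μ₀) - β * gapIntegral G y (b y) = 0 → y = x := by
  refine exists_zero_unique_of_strictMonoOn_Iic hμ₀s.le ?_
    (strictMonoOn_sub_mul_gapIntegral hG.monotone hb hb_ge hβ0.le hβ1) ?_ ?_
  · have := hG_cont.gapIntegral_comp continuous_id hb_cont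
    fun_prop
  · have hμ₀b : μ₀ < b μ₀ := hμ₀s.trans_le (hbs ▸ hb hμ₀s.le (mem_Iic.2 le_rfl) hμ₀s.le)
    have := gapIntegral_pos hG hμ₀b
    simp only [sub_self, mul_zero, zero_sub, neg_neg_iff_pos]
    positivity
  · simp only [hbs, gapIntegral_self, mul_zero, sub_zero]
    nlinarith

theorem strictMono_integral_Iic {g : ℝ → ℝ} (hg : Integrable g) (hg_pos : ∀ x, 0 < g x) :
    StrictMono fun x => ∫ t in Iic x, g t := fun a b hab => by
  have := intervalIntegral.integral_Iic_sub_Iic hg.integrableOn hg.integrableOn (a := a) (b := b)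
  have := intervalIntegral.intervalIntegral_pos_of_pos hg.intervalIntegrable hg_pos hab
  simp only
  linarith

theorem continuous_integral_Iic {g : ℝ → ℝ} (hg : Integrable g) :
    Continuous fun x => ∫ t in Iic x, g t := by
  have h : ∀ x, ∫ t in Iic x, g t = (∫ t in Iic 0, g t) + ∫ t in (0 : ℝ)..x, g t := fun x => by
    rw [← intervalIntegral.integral_Iic_sub_Iic hg.integrableOn hg.integrableOn]
    ring
  exact (continuous_const.add (hg.continuous_primitive 0)).congr fun x => (h x).symm

theorem stmt_7_general (g : ℝ → ℝ) (hg_pos : ∀ x, 0 < g x)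
    (hg_one : (∫ x, g x) = 1)
    (μ₀ : ℝ) (hμ₀pos : 0 < μ₀)
    (G : ℝ → ℝ) (hG : ∀ x, G x = ∫ t in Iic x, g t)
    (β : ℝ) (hβ : β ∈ Set.Ioo (0 : ℝ) 1)
    (q : ℝ) (hq : q ∈ Set.Ioo (0 : ℝ) 1)
    (r r₀ : ℝ) (hr : 0 < r) (hrr₀ : r < r₀)
    (s : ℝ) (hs : s = r₀ * μ₀ / r)
    (xbar : ℝ → ℝ) (hxbar : ∀ u, xbar u = 2 * s / (1 + q) - ((1 - q) / (1 + q)) * u)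
    (Q : ℝ → ℝ)
    (hQ : ∀ u, Q u = β * (∫ x in u..(xbar u), (G x - G (xbar u))) - (1 - β) * (μ₀ - u)) :
    ∃ xl, (xl ∈ Set.Iic s ∧ Q xl = 0) ∧
      (∀ y ∈ Set.Iic s, Q y = 0 → y = xl) ∧
      μ₀ < xl ∧ xl < s ∧ s < xbar xl := by
  obtain ⟨hβ0, hβ1⟩ := hβ
  obtain ⟨hq0, hq1⟩ := hq
  have hg := integrable_of_integral_eq_one hg_one
  have hG_mono : StrictMono G := (funext hG : G = _) ▸ strictMono_integral_Iic hg hg_pos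
  have hG_cont : Continuous G := (funext hG : G = _) ▸ continuous_integral_Iic hg
  have hμ₀s : μ₀ < s := by
    rw [hs, lt_div_iff₀ hr]
    nlinarith
  have hxbar_sub : ∀ u, xbar u - s = (1 - q) / (1 + q) * (s - u) := fun u => by
    rw [hxbar]; field_simp; ring
  have hk : 0 < (1 - q) / (1 + q) := div_pos (by linarith) (by linarith)
  have hxbar_gt : ∀ u < s, s < xbar u := fun u hu => by nlinarith [hxbar_sub u]
  have hQ_eq : ∀ u, Q u = (1 - β) * (u - μ₀) - β * gapIntegral G u (xbar u) := fun u => by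
    rw [hQ, integral_sub_eq_neg_gapIntegral]
    ring
  obtain ⟨xl, ⟨hμ₀xl, hxls⟩, hQxl, huniq⟩ := exists_unique_zero_sub_mul_gapIntegral (b := xbar)
    hG_mono hG_cont (by simp only [funext hxbar]; fun_prop)
    (fun u _ v _ huv => by nlinarith [hxbar_sub u, hxbar_sub v])
    (fun u _ => by nlinarith [hxbar_sub u]) (by linarith [hxbar_sub s]) hμ₀s hβ0 hβ1
  simp only [← hQ_eq] at hQxl huniq
  exact ⟨xl, ⟨hxls.le, hQxl⟩, huniq, hμ₀xl, hxls, hxbar_gt xl hxls⟩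

/-- Existence and uniqueness of the equilibrium thresholds when `r < r₀` (Proposition 2):
`Q` has a unique zero `x̲` in `(−∞, s]`, it satisfies `μ₀ < x̲ < s`, and the corresponding
upper threshold `x̄ = x̄(x̲)` satisfies `x̄ > s`; so the withholding interval straddles
`s = r₀μ₀/r` (Corollary 1). -/
theorem stmt_7 (g : ℝ → ℝ) (hg_cont : Continuous g) (hg_pos : ∀ x, 0 < g x)
    (hg_one : (∫ x, g x) = 1)
    (hxg_int : Integrable (fun x => x * g x))
    (μ₀ : ℝ) (hμ₀ : μ₀ = ∫ x, x * g x) (hμ₀pos : 0 < μ₀)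
    (G : ℝ → ℝ) (hG : ∀ x, G x = ∫ t in Iic x, g t)
    (β : ℝ) (hβ : β ∈ Set.Ioo (0 : ℝ) 1)
    (q : ℝ) (hq : q ∈ Set.Ioo (0 : ℝ) 1)
    (r r₀ : ℝ) (hr : 0 < r) (hrr₀ : r < r₀)
    (s : ℝ) (hs : s = r₀ * μ₀ / r)
    (xbar : ℝ → ℝ) (hxbar : ∀ u, xbar u = 2 * s / (1 + q) - ((1 - q) / (1 + q)) * u)
    (Q : ℝ → ℝ)
    (hQ : ∀ u, Q u = β * (∫ x in u..(xbar u), (G x - G (xbar u))) - (1 - β) * (μ₀ - u)) :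
    ∃ xl, (xl ∈ Set.Iic s ∧ Q xl = 0) ∧
      (∀ y ∈ Set.Iic s, Q y = 0 → y = xl) ∧
      μ₀ < xl ∧ xl < s ∧ s < xbar xl :=
  stmt_7_general g hg_pos hg_one μ₀ hμ₀pos G hG β hβ q hq r r₀ hr hrr₀ s hs xbar hxbar Q hQ
end

section
/- Let g : ℝ → ℝ be a continuous, everywhere positive probability density with CDF G(x) = ∫_{−∞}^{x} g(t) dt, ∫_ℝ g = 1, mean μ₀ = ∫_ℝ x·g(x) dx, and μ₀ > 0. Let β ∈ (0,1) and 0 < r < r₀, and set s := r₀μ₀/r. For q ∈ (0,1) define x̄_q(u) = 2s/(1+q) − ((1−q)/(1+q))·u, let x̲(q) be the unique zero in (μ₀, s) of Q_q(u) = β·∫_{u}^{x̄_q(u)} (G(x) − G(x̄_q(u))) dx − (1−β)·(μ₀ − u), and let x̄(q) = x̄_q(x̲(q)). Then for all q₁ < q₂ in (0,1): x̲(q₂) < x̲(q₁) and x̄(q₂) < x̄(q₁). -/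
/-!
Write `Φ(u, b) = β ∫ᵤᵇ (G x - G b) dx - (1 - β)(μ₀ - u)`, so that `Q q u = Φ(u, x̄_q(u))`.
Since `G` is strictly increasing, `Φ` is strictly increasing in `u` and strictly decreasing in
`b` on `u ≤ b`. The line `x̄_q(u) = u + 2(s - u)/(1 + q)` is decreasing in `u` and, for `u < s`,
decreasing in `q`, so `Q q u` is strictly increasing in both `u` and `q` on `u < s`; hence its zero
`x̲(q)` decreases in `q`. Then `Φ(x̲(q₂), x̄(q₁)) < Φ(x̲(q₁), x̄(q₁)) = 0 = Φ(x̲(q₂), x̄(q₂))`,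
and monotonicity in `b` gives `x̄(q₂) < x̄(q₁)`.
-/

open MeasureTheory Set

theorem strictMono_integral_Iic_of_pos {g : ℝ → ℝ} (hg : Integrable g) (hpos : ∀ x, 0 < g x) :
    StrictMono fun x => ∫ t in Iic x, g t := by
  intro a b hab
  have hdiff : (∫ t in Iic b, g t) - ∫ t in Iic a, g t = ∫ t in a..b, g t :=
    intervalIntegral.integral_Iic_sub_Iic hg.integrableOn hg.integrableOn
  have hpos_int : 0 < ∫ t in a..b, g t :=
    intervalIntegral.intervalIntegral_pos_of_pos_on hg.intervalIntegrable (fun x _ => hpos x) hab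
  show (∫ t in Iic a, g t) < ∫ t in Iic b, g t
  linarith

section Integral

variable {G : ℝ → ℝ} {u u' b b' : ℝ}

theorem Monotone.intervalIntegral_sub_le_of_le_left (hG : Monotone G) (hu : u ≤ u')
    (hb : u' ≤ b) : ∫ x in u..b, (G x - G b) ≤ ∫ x in u'..b, (G x - G b) := by
  have hint : ∀ c d, IntervalIntegrable (fun x => G x - G b) volume c d := fun _ _ =>
    hG.intervalIntegrable.sub intervalIntegrable_const
  have hnonpos : ∫ x in u..u', (G x - G b) ≤ 0 := by
    simpa using intervalIntegral.integral_mono_on hu (hint u u') intervalIntegrable_const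
      fun x hx => sub_nonpos.mpr (hG (hx.2.trans hb))
  rw [← intervalIntegral.integral_add_adjacent_intervals (hint u u') (hint u' b)]
  linarith

theorem StrictMono.intervalIntegral_sub_lt_of_lt_right (hG : StrictMono G) (hu : u ≤ b)
    (hb : b < b') : ∫ x in u..b', (G x - G b') < ∫ x in u..b, (G x - G b) := by
  have hint : ∀ c d e, IntervalIntegrable (fun x => G x - G e) volume c d := fun _ _ _ =>
    hG.monotone.intervalIntegrable.sub intervalIntegrable_const
  have hle : ∫ x in u..b, (G x - G b') ≤ ∫ x in u..b, (G x - G b) :=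
    intervalIntegral.integral_mono_on hu (hint u b b') (hint u b b) fun _ _ =>
      sub_le_sub_left (hG hb).le _
  have hneg : ∫ x in b..b', (G x - G b') < 0 := by
    have hpos : 0 < ∫ x in b..b', (G b' - G x) :=
      intervalIntegral.intervalIntegral_pos_of_pos_on
        (intervalIntegrable_const.sub hG.monotone.intervalIntegrable)
        (fun x hx => sub_pos.mpr (hG hx.2)) hb
    have hflip : ∫ x in b..b', (G x - G b') = -∫ x in b..b', (G b' - G x) := by
      rw [← intervalIntegral.integral_neg]
      simp_rw [neg_sub]
    linarith
  rw [← intervalIntegral.integral_add_adjacent_intervals (hint u b b') (hint b b' b')]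
  linarith

end Integral

/-- `Φ(u, b)`; the paper's `Q_q(u)` is `Φ(u, x̄_q(u))`. -/
noncomputable def disclosureGain (G : ℝ → ℝ) (β μ₀ u b : ℝ) : ℝ :=
  β * (∫ x in u..b, (G x - G b)) - (1 - β) * (μ₀ - u)

section DisclosureGain

variable {G : ℝ → ℝ} {β μ₀ u u' b : ℝ}

theorem disclosureGain_lt_of_lt_left (hG : Monotone G) (hβ₀ : 0 ≤ β) (hβ₁ : β < 1)
    (hu : u < u') (hb : u' ≤ b) : disclosureGain G β μ₀ u b < disclosureGain G β μ₀ u' b := by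
  have := mul_le_mul_of_nonneg_left (hG.intervalIntegral_sub_le_of_le_left hu.le hb) hβ₀
  have := mul_lt_mul_of_pos_left hu (sub_pos.mpr hβ₁)
  unfold disclosureGain
  linarith

theorem strictAntiOn_disclosureGain_right (hG : StrictMono G) (hβ : 0 < β) :
    StrictAntiOn (disclosureGain G β μ₀ u) (Ici u) := by
  intro b hb b' _ hbb'
  have := mul_lt_mul_of_pos_left (hG.intervalIntegral_sub_lt_of_lt_right hb hbb') hβ
  unfold disclosureGain
  linarith

end DisclosureGain

noncomputable def upperThreshold (s q u : ℝ) : ℝ :=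
  2 * s / (1 + q) - ((1 - q) / (1 + q)) * u

section UpperThreshold

variable {s q q₁ q₂ u : ℝ}

theorem upperThreshold_eq (hq : -1 < q) : upperThreshold s q u = u + 2 * (s - u) / (1 + q) := by
  have : 1 + q ≠ 0 := by linarith
  unfold upperThreshold
  field_simp
  ring

theorem lt_upperThreshold (hq : q ∈ Ioo (-1) 1) (hu : u < s) : s < upperThreshold s q u := by
  have : s - u < 2 * (s - u) / (1 + q) := by
    rw [lt_div_iff₀ (by linarith [hq.1])]
    nlinarith [hq.2]
  rw [upperThreshold_eq hq.1]
  linarith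

theorem upperThreshold_strictAnti (hq : q ∈ Ioo (-1) 1) : StrictAnti (upperThreshold s q) := by
  intro u u' huu'
  have hslope : 0 < (1 - q) / (1 + q) := div_pos (by linarith [hq.2]) (by linarith [hq.1])
  have := mul_lt_mul_of_pos_left huu' hslope
  unfold upperThreshold
  linarith

theorem upperThreshold_lt_of_lt (hq₁ : -1 < q₁) (hq : q₁ < q₂) (hu : u < s) :
    upperThreshold s q₂ u < upperThreshold s q₁ u := by
  rw [upperThreshold_eq hq₁, upperThreshold_eq (hq₁.trans hq), add_lt_add_iff_left]
  exact div_lt_div_of_pos_left (by linarith) (by linarith) (by linarith)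

end UpperThreshold

section Comparative

variable {G : ℝ → ℝ} {β μ₀ s q q₁ q₂ u : ℝ}

theorem strictMonoOn_disclosureGain_upperThreshold (hG : StrictMono G) (hβ : β ∈ Ioo 0 1)
    (hq : q ∈ Ioo (-1) 1) :
    StrictMonoOn (fun u => disclosureGain G β μ₀ u (upperThreshold s q u)) (Iio s) := by
  intro u hu u' hu' huu'
  have hsu : s < upperThreshold s q u := lt_upperThreshold hq hu
  have hsu' : s < upperThreshold s q u' := lt_upperThreshold hq hu'
  calc disclosureGain G β μ₀ u (upperThreshold s q u)
      < disclosureGain G β μ₀ u' (upperThreshold s q u) :=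
        disclosureGain_lt_of_lt_left hG.monotone hβ.1.le hβ.2 huu' (hu'.le.trans hsu.le)
    _ < disclosureGain G β μ₀ u' (upperThreshold s q u') :=
        strictAntiOn_disclosureGain_right hG hβ.1 (hu'.le.trans hsu'.le) (hu'.le.trans hsu.le)
          (upperThreshold_strictAnti hq huu')

theorem disclosureGain_upperThreshold_lt_of_lt (hG : StrictMono G) (hβ : 0 < β)
    (hq₁ : q₁ ∈ Ioo (-1) 1) (hq₂ : q₂ ∈ Ioo (-1) 1) (hq : q₁ < q₂) (hu : u < s) :
    disclosureGain G β μ₀ u (upperThreshold s q₁ u) <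
      disclosureGain G β μ₀ u (upperThreshold s q₂ u) :=
  strictAntiOn_disclosureGain_right hG hβ
    (hu.trans (lt_upperThreshold hq₂ hu)).le (hu.trans (lt_upperThreshold hq₁ hu)).le
    (upperThreshold_lt_of_lt hq₁.1 hq hu)

end Comparative

theorem stmt_11_general (g : ℝ → ℝ) (hg_pos : ∀ x, 0 < g x)
    (hg_one : (∫ x, g x) = 1)
    (μ₀ : ℝ)
    (G : ℝ → ℝ) (hG : ∀ x, G x = ∫ t in Iic x, g t)
    (β : ℝ) (hβ : β ∈ Set.Ioo (0 : ℝ) 1)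
    (s : ℝ)
    (xbar : ℝ → ℝ → ℝ)
    (hxbar : ∀ q u, xbar q u = 2 * s / (1 + q) - ((1 - q) / (1 + q)) * u)
    (Q : ℝ → ℝ → ℝ)
    (hQ : ∀ q u, Q q u
      = β * (∫ x in u..(xbar q u), (G x - G (xbar q u))) - (1 - β) * (μ₀ - u))
    (q₁ q₂ : ℝ) (hq₁ : q₁ ∈ Set.Ioo (0 : ℝ) 1) (hq₂ : q₂ ∈ Set.Ioo (0 : ℝ) 1)
    (hqq : q₁ < q₂)
    (xl₁ xl₂ : ℝ) (hxl₁ : xl₁ ∈ Set.Ioo μ₀ s) (hxl₂ : xl₂ ∈ Set.Ioo μ₀ s)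
    (hz₁ : Q q₁ xl₁ = 0) (hz₂ : Q q₂ xl₂ = 0) :
    xl₂ < xl₁ ∧ xbar q₂ xl₂ < xbar q₁ xl₁ := by
  have hGstrict : StrictMono G := by
    rw [funext hG]
    exact strictMono_integral_Iic_of_pos (.of_integral_ne_zero (by simp [hg_one])) hg_pos
  obtain rfl : xbar = upperThreshold s := funext₂ hxbar
  obtain rfl : Q = fun q u => disclosureGain G β μ₀ u (upperThreshold s q u) := funext₂ hQ
  simp only at hz₁ hz₂
  have hq₁' : q₁ ∈ Ioo (-1) 1 := Ioo_subset_Ioo_left (by norm_num) hq₁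
  have hq₂' : q₂ ∈ Ioo (-1) 1 := Ioo_subset_Ioo_left (by norm_num) hq₂
  have hb₁ : s < upperThreshold s q₁ xl₁ := lt_upperThreshold hq₁' hxl₁.2
  have hb₂ : s < upperThreshold s q₂ xl₂ := lt_upperThreshold hq₂' hxl₂.2
  have hmono : StrictMonoOn (fun u => disclosureGain G β μ₀ u (upperThreshold s q₂ u)) (Iio s) :=
    strictMonoOn_disclosureGain_upperThreshold hGstrict hβ hq₂'
  have hlow : xl₂ < xl₁ := by
    refine hmono.lt_iff_lt hxl₂.2 hxl₁.2 |>.mp ?_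
    calc disclosureGain G β μ₀ xl₂ (upperThreshold s q₂ xl₂)
        = disclosureGain G β μ₀ xl₁ (upperThreshold s q₁ xl₁) := hz₂.trans hz₁.symm
      _ < disclosureGain G β μ₀ xl₁ (upperThreshold s q₂ xl₁) :=
        disclosureGain_upperThreshold_lt_of_lt hGstrict hβ.1 hq₁' hq₂' hqq hxl₁.2
  have hanti : StrictAntiOn (disclosureGain G β μ₀ xl₂) (Ici xl₂) :=
    strictAntiOn_disclosureGain_right hGstrict hβ.1
  refine ⟨hlow, hanti.lt_iff_gt (hxl₂.2.trans hb₁).le (hxl₂.2.trans hb₂).le |>.mp ?_⟩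
  calc disclosureGain G β μ₀ xl₂ (upperThreshold s q₁ xl₁)
      < disclosureGain G β μ₀ xl₁ (upperThreshold s q₁ xl₁) :=
        disclosureGain_lt_of_lt_left hGstrict.monotone hβ.1.le hβ.2 hlow (hxl₁.2.trans hb₁).le
    _ = disclosureGain G β μ₀ xl₂ (upperThreshold s q₂ xl₂) := hz₁.trans hz₂.symm

/-- Part 2(a) of Proposition 4 (case `r < r₀`): both equilibrium disclosure thresholds
decrease in the firm's information environment `q`, i.e. `∂x̲/∂q < 0` and `∂x̄/∂q < 0`. -/
theorem stmt_11 (g : ℝ → ℝ) (hg_cont : Continuous g) (hg_pos : ∀ x, 0 < g x)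
    (hg_one : (∫ x, g x) = 1)
    (hxg_int : Integrable (fun x => x * g x))
    (μ₀ : ℝ) (hμ₀ : μ₀ = ∫ x, x * g x) (hμ₀pos : 0 < μ₀)
    (G : ℝ → ℝ) (hG : ∀ x, G x = ∫ t in Iic x, g t)
    (β : ℝ) (hβ : β ∈ Set.Ioo (0 : ℝ) 1)
    (r r₀ : ℝ) (hr : 0 < r) (hrr₀ : r < r₀)
    (s : ℝ) (hs : s = r₀ * μ₀ / r)
    (xbar : ℝ → ℝ → ℝ)
    (hxbar : ∀ q u, xbar q u = 2 * s / (1 + q) - ((1 - q) / (1 + q)) * u)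
    (Q : ℝ → ℝ → ℝ)
    (hQ : ∀ q u, Q q u
      = β * (∫ x in u..(xbar q u), (G x - G (xbar q u))) - (1 - β) * (μ₀ - u))
    (q₁ q₂ : ℝ) (hq₁ : q₁ ∈ Set.Ioo (0 : ℝ) 1) (hq₂ : q₂ ∈ Set.Ioo (0 : ℝ) 1)
    (hqq : q₁ < q₂)
    (xl₁ xl₂ : ℝ) (hxl₁ : xl₁ ∈ Set.Ioo μ₀ s) (hxl₂ : xl₂ ∈ Set.Ioo μ₀ s)
    (hz₁ : Q q₁ xl₁ = 0) (hz₂ : Q q₂ xl₂ = 0) :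
    xl₂ < xl₁ ∧ xbar q₂ xl₂ < xbar q₁ xl₁ :=
  stmt_11_general g hg_pos hg_one μ₀ G hG β hβ s xbar hxbar Q hQ q₁ q₂ hq₁ hq₂ hqq xl₁ xl₂ hxl₁ hxl₂
    hz₁ hz₂
end

section
/- Let g : ℝ → ℝ be a continuous, everywhere positive probability density with CDF G(x) = ∫_{−∞}^{x} g(t) dt, ∫_ℝ g = 1, mean μ₀ = ∫_ℝ x·g(x) dx, and μ₀ > 0. Let β ∈ (0,1), p ∈ (0,1), and s ∈ ℝ. Define T(v) = (β/((1−β)(1−p)))·∫_{2s−v}^{v} (G(x) − G(2s−v)) dx + (p/(1−p))·∫_{−∞}^{v} G(x) dx − (μ₀ − v), where the improper integral is finite because g has a finite mean. Then T is strictly increasing on [s, +∞), T(v) → +∞ as v → +∞, and T has a zero in (s, +∞) if and only if T(s) = (p/(1−p))·∫_{−∞}^{s} G(x) dx + s − μ₀ < 0; when it exists, this zero x̄_p is unique. -/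
/-!
Write `T v = v + φ v`. The term `∫_{-∞}^v G` is nondecreasing because `G ≥ 0`, and the
symmetric term `∫_{2s-v}^v (G x - G (2s-v)) dx` is nondecreasing for `v ≥ s`, because as `v`
grows the interval widens on both sides while the subtracted value `G (2s-v)` drops (`G` is
monotone). So `φ` is monotone on `[s, ∞)`, whence `T` is strictly increasing there with
`T v ≥ T s + (v - s)`. As `T` is continuous, the intermediate value theorem gives a zero beyond
`s` exactly when `T s < 0`.
-/

open MeasureTheory Set Filter

section Primitive

variable {μ : Measure ℝ} {f : ℝ → ℝ}

theorem continuous_integral_Iic_s15 [NullSingletonClass μ] (hf : ∀ a, IntegrableOn f (Iic a) μ) :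
    Continuous fun b => ∫ x in Iic b, f x ∂μ :=
  continuous_iff_continuousAt.2 fun b =>
    (hf (b + 1)).continuousOn_Iic_primitive_Iic.continuousAt (Iic_mem_nhds (by linarith))

theorem monotone_integral_Iic (hf : ∀ a, IntegrableOn f (Iic a) μ) (h0 : 0 ≤ f) :
    Monotone fun b => ∫ x in Iic b, f x ∂μ := fun _ b hab =>
  setIntegral_mono_set (hf b) (ae_of_all _ fun x => h0 x) (Iic_subset_Iic.2 hab).eventuallyLE

end Primitive

noncomputable def excessIntegral (G : ℝ → ℝ) (a b : ℝ) : ℝ :=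
  ∫ x in a..b, (G x - G a)

section ExcessIntegral

variable {G : ℝ → ℝ}

theorem excessIntegral_mono (hG : Monotone G) {a a' b b' : ℝ} (ha : a' ≤ a) (hab : a ≤ b)
    (hb : b ≤ b') : excessIntegral G a b ≤ excessIntegral G a' b' :=
  have hint (c d e : ℝ) : IntervalIntegrable (fun x => G x - G e) volume c d :=
    hG.intervalIntegrable.sub intervalIntegrable_const
  calc excessIntegral G a b ≤ ∫ x in a..b, (G x - G a') :=
        intervalIntegral.integral_mono_on hab (hint _ _ _) (hint _ _ _)
          fun _ _ => by linarith [hG ha]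
    _ ≤ excessIntegral G a' b' :=
        intervalIntegral.integral_mono_interval ha hab hb
          ((ae_restrict_iff' measurableSet_Ioc).2 (ae_of_all _ fun x hx =>
            sub_nonneg.2 (hG hx.1.le)))
          (hint _ _ _)

theorem excessIntegral_eq (hG : Continuous G) (a b : ℝ) :
    excessIntegral G a b =
      (∫ x in (0 : ℝ)..b, G x) - (∫ x in (0 : ℝ)..a, G x) - (b - a) * G a := by
  rw [excessIntegral, intervalIntegral.integral_sub (hG.intervalIntegrable _ _)
      intervalIntegrable_const, intervalIntegral.integral_const, smul_eq_mul,
    intervalIntegral.integral_interval_sub_left (hG.intervalIntegrable _ _)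
      (hG.intervalIntegrable _ _)]

theorem Continuous.excessIntegral (hG : Continuous G) {a b : ℝ → ℝ} (ha : Continuous a)
    (hb : Continuous b) : Continuous fun v => excessIntegral G (a v) (b v) := by
  have hP := intervalIntegral.continuous_primitive (μ := volume)
    (fun _ _ => hG.intervalIntegrable _ _) 0
  simp only [excessIntegral_eq hG]
  exact ((hP.comp hb).sub (hP.comp ha)).sub ((hb.sub ha).mul (hG.comp ha))

end ExcessIntegral

section ZeroOnIci

variable {f : ℝ → ℝ} {s : ℝ}

theorem strictMonoOn_of_monotoneOn_sub_id {S : Set ℝ} (h : MonotoneOn (fun x => f x - x) S) :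
    StrictMonoOn f S := by
  simpa using h.add_strictMono (strictMono_id.strictMonoOn S)

theorem tendsto_atTop_of_monotoneOn_sub_id (h : MonotoneOn (fun x => f x - x) (Ici s)) :
    Tendsto f atTop atTop := by
  refine tendsto_atTop_mono' atTop ?_ (tendsto_atTop_add_const_right atTop (f s - s) tendsto_id)
  filter_upwards [eventually_ge_atTop s] with v hv
  have := h self_mem_Ici hv hv
  simp only [id] at this ⊢
  linarith

theorem StrictMonoOn.exists_mem_Ioi_eq_zero_iff (hf : StrictMonoOn f (Ici s))
    (hc : ContinuousOn f (Ici s)) (htop : Tendsto f atTop atTop) :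
    (∃ v ∈ Ioi s, f v = 0) ↔ f s < 0 := by
  constructor
  · rintro ⟨v, hv, hfv⟩
    exact hfv ▸ hf self_mem_Ici (mem_Ici.2 hv.le) hv
  · intro hs
    obtain ⟨b, hb0, hsb⟩ := ((htop.eventually_gt_atTop 0).and (eventually_ge_atTop s)).exists
    obtain ⟨v, hv, hfv⟩ :=
      intermediate_value_Icc hsb (hc.mono Icc_subset_Ici_self) ⟨hs.le, hb0.le⟩
    refine ⟨v, lt_of_le_of_ne hv.1 ?_, hfv⟩
    rintro rfl
    exact hs.ne hfv

end ZeroOnIci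

theorem stmt_15_general (g : ℝ → ℝ) (hg_pos : ∀ x, 0 < g x)
    (hg_one : (∫ x, g x) = 1)
    (μ₀ : ℝ)
    (G : ℝ → ℝ) (hG : ∀ x, G x = ∫ t in Iic x, g t)
    (hGint : ∀ a : ℝ, IntegrableOn G (Set.Iic a))
    (β : ℝ) (hβ : β ∈ Set.Ioo (0 : ℝ) 1)
    (p : ℝ) (hp : p ∈ Set.Ioo (0 : ℝ) 1)
    (s : ℝ)
    (T : ℝ → ℝ)
    (hT : ∀ v, T v = β / ((1 - β) * (1 - p)) * (∫ x in (2 * s - v)..v, (G x - G (2 * s - v)))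
      + p / (1 - p) * (∫ x in Set.Iic v, G x) - (μ₀ - v)) :
    StrictMonoOn T (Set.Ici s) ∧ Tendsto T atTop atTop ∧
      ((∃ v ∈ Set.Ioi s, T v = 0) ↔
        p / (1 - p) * (∫ x in Set.Iic s, G x) + s - μ₀ < 0) ∧
      ∀ v₁ ∈ Set.Ioi s, ∀ v₂ ∈ Set.Ioi s, T v₁ = 0 → T v₂ = 0 → v₁ = v₂ := by
  obtain ⟨hβ0, hβ1⟩ := hβ
  obtain ⟨hp0, hp1⟩ := hp
  have hg_int : Integrable g := Integrable.of_integral_ne_zero (by simp [hg_one])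
  have hG_eq : G = fun x => ∫ t in Iic x, g t := funext hG
  have hG_mono : Monotone G :=
    hG_eq ▸ monotone_integral_Iic (fun _ => hg_int.integrableOn) fun x => (hg_pos x).le
  have hG_cont : Continuous G := hG_eq ▸ continuous_integral_Iic_s15 fun _ => hg_int.integrableOn
  have hJ_mono : Monotone fun v => ∫ x in Iic v, G x :=
    monotone_integral_Iic hGint fun x =>
      hG x ▸ setIntegral_nonneg measurableSet_Iic fun t _ => (hg_pos t).le
  have hc₁ : 0 ≤ β / ((1 - β) * (1 - p)) :=
    div_nonneg hβ0.le (mul_nonneg (by linarith) (by linarith))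
  have hc₂ : 0 ≤ p / (1 - p) := div_nonneg hp0.le (by linarith)
  have h_sub_id : MonotoneOn (fun v => T v - v) (Ici s) := by
    intro v₁ (h₁ : s ≤ v₁) v₂ _ h₁₂
    have hE : excessIntegral G (2 * s - v₁) v₁ ≤ excessIntegral G (2 * s - v₂) v₂ :=
      excessIntegral_mono hG_mono (by linarith) (by linarith) h₁₂
    simp only [hT]
    unfold excessIntegral at hE
    linarith [mul_le_mul_of_nonneg_left hE hc₁, mul_le_mul_of_nonneg_left (hJ_mono h₁₂) hc₂]
  have hT_cont : Continuous T := by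
    rw [funext hT]
    exact ((continuous_const.mul (hG_cont.excessIntegral (by fun_prop) continuous_id)).add
      (continuous_const.mul (continuous_integral_Iic_s15 hGint))).sub (by fun_prop)
  have hT_s : T s = p / (1 - p) * (∫ x in Set.Iic s, G x) + s - μ₀ := by
    rw [hT, show 2 * s - s = s by ring, intervalIntegral.integral_same]
    ring
  have hT_strict := strictMonoOn_of_monotoneOn_sub_id h_sub_id
  have hT_top := tendsto_atTop_of_monotoneOn_sub_id h_sub_id
  refine ⟨hT_strict, hT_top,
    hT_s ▸ hT_strict.exists_mem_Ioi_eq_zero_iff hT_cont.continuousOn hT_top,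
    fun v₁ hv₁ v₂ hv₂ h₁ h₂ => hT_strict.injOn (Ioi_subset_Ici_self hv₁)
      (Ioi_subset_Ici_self hv₂) (h₁.trans h₂.symm)⟩

/-- Extension with the firm's endogenous response (Proposition 6, case `r > r̄`): the
equilibrium-determining function `T` is strictly increasing on `[s, +∞)`, tends to `+∞`
at `+∞`, has a zero in `(s, +∞)` iff `T(s) = (p/(1−p))·∫_{−∞}^{s} G + s − μ₀ < 0`, and
such a zero is unique when it exists. -/
theorem stmt_15 (g : ℝ → ℝ) (hg_cont : Continuous g) (hg_pos : ∀ x, 0 < g x)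
    (hg_one : (∫ x, g x) = 1)
    (hxg_int : Integrable (fun x => x * g x))
    (μ₀ : ℝ) (hμ₀ : μ₀ = ∫ x, x * g x) (hμ₀pos : 0 < μ₀)
    (G : ℝ → ℝ) (hG : ∀ x, G x = ∫ t in Iic x, g t)
    (hGint : ∀ a : ℝ, IntegrableOn G (Set.Iic a))
    (β : ℝ) (hβ : β ∈ Set.Ioo (0 : ℝ) 1)
    (p : ℝ) (hp : p ∈ Set.Ioo (0 : ℝ) 1)
    (s : ℝ)
    (T : ℝ → ℝ)
    (hT : ∀ v, T v = β / ((1 - β) * (1 - p)) * (∫ x in (2 * s - v)..v, (G x - G (2 * s - v)))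
      + p / (1 - p) * (∫ x in Set.Iic v, G x) - (μ₀ - v)) :
    StrictMonoOn T (Set.Ici s) ∧ Tendsto T atTop atTop ∧
      ((∃ v ∈ Set.Ioi s, T v = 0) ↔
        p / (1 - p) * (∫ x in Set.Iic s, G x) + s - μ₀ < 0) ∧
      ∀ v₁ ∈ Set.Ioi s, ∀ v₂ ∈ Set.Ioi s, T v₁ = 0 → T v₂ = 0 → v₁ = v₂ :=
  stmt_15_general g hg_pos hg_one μ₀ G hG hGint β hβ p hp s T hT
end
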